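/- For any finite nonempty sequence a of real numbers, the panorama sequence pan(a) is an ascent sequence. -/

import Mathlib

def ascents (l : List ℕ) : ℕ :=
  ((l.zip l.tail).filter (fun p => p.1 < p.2)).length

def IsAscSeq (l : List ℕ) : Prop :=
  l.getD 0 0 = 0 ∧
  ∀ k, k < l.length → 0 < k → l.getD k 0 ≤ ascents (l.take k) + 1

def IsRGF (l : List ℕ) : Prop :=
  l.getD 0 0 = 0 ∧
  ∀ k, k < l.length → ∀ j, l.getD k 0 = j + 1 → ∃ i, i < k ∧ l.getD i 0 = j

def SelfModified (l : List ℕ) : Prop :=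
  IsAscSeq l ∧
  ∀ k, k < l.length → 0 < k →
    l.getD k 0 ≤ l.getD (k - 1) 0 ∨ l.getD k 0 = ascents (l.take k) + 1

def Contains101 (l : List ℕ) : Prop :=
  ∃ i j k, i < j ∧ j < k ∧ k < l.length ∧
    l.getD i 0 = l.getD k 0 ∧ l.getD j 0 < l.getD k 0

def Contains0101 (l : List ℕ) : Prop :=
  ∃ i j k m, i < j ∧ j < k ∧ k < m ∧ m < l.length ∧
    l.getD i 0 = l.getD k 0 ∧ l.getD j 0 = l.getD m 0 ∧ l.getD i 0 < l.getD j 0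

def Contains1010 (l : List ℕ) : Prop :=
  ∃ i j k m, i < j ∧ j < k ∧ k < m ∧ m < l.length ∧
    l.getD i 0 = l.getD k 0 ∧ l.getD j 0 = l.getD m 0 ∧ l.getD j 0 < l.getD i 0

/-- The view of position `i` in the sequence `a`: the number of indices `j > i` such
that `a j` strictly exceeds all entries `a k` for `i ≤ k < j`.  This agrees with the
recursive definition `v i = v j + 1` for `j` the least index `> i` with `a j > a i`. -/
def view {α : Type*} [LinearOrder α] [Inhabited α] (a : List α) (i : ℕ) : ℕ :=
  ((List.range a.length).filter (fun j =>
    decide (i < j ∧ ∀ k, k < j → i ≤ k → a.getD k default < a.getD j default))).length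

/-- The panorama of `a`: the views of the positions of `a`, listed grouped by entry
value from largest value to smallest, positions within a group in increasing order. -/
def pan {α : Type*} [LinearOrder α] [Inhabited α] (a : List α) : List ℕ :=
  ((List.range a.length).mergeSort (fun i j =>
    decide (a.getD j default < a.getD i default ∨
      (a.getD i default = a.getD j default ∧ i ≤ j)))).map (view a)

/-- A square matrix of natural numbers, given by a dimension and an entry function
(indices are 0-based; entries with an index `≥ d` are irrelevant/zero). -/
structure FMat where
  d : ℕ
  entry : ℕ → ℕ → ℕ

/-- 0-based index of the first row whose rightmost entry is nonzero. -/
noncomputable def mindex (M : FMat) : ℕ :=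
  sInf {i | M.entry i (M.d - 1) ≠ 0}

/-- One step of the recursive bijection from ascent sequences to Fishburn matrices,
with cases AM1, AM2, AM3 (0-based indices). -/
noncomputable def fStep (M : FMat) (a : ℕ) : FMat :=
  if a ≤ mindex M then
    -- AM1: increase entry (a, d-1)
    ⟨M.d, fun i j => M.entry i j + if i = a ∧ j = M.d - 1 then 1 else 0⟩
  else if a = M.d then
    -- AM2: append a new row and column, with 1 in the new diagonal entry
    ⟨M.d + 1, fun i j =>
      if i = M.d ∨ j = M.d then (if i = M.d ∧ j = M.d then 1 else 0)
      else M.entry i j⟩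
  else
    -- AM3: insert a new row and column at index a
    ⟨M.d + 1, fun i j =>
      if i = a then (if j = M.d then 1 else 0)
      else if j = a then (if i < a then M.entry i (M.d - 1) else 0)
      else if j = M.d ∧ i < a then 0
      else M.entry (if i < a then i else i - 1) (if j < a then j else j - 1)⟩

/-- The map from ascent sequences to Fishburn matrices. -/
noncomputable def fAM (l : List ℕ) : FMat :=
  l.tail.foldl fStep ⟨1, fun i j => if i = 0 ∧ j = 0 then 1 else 0⟩

/-- Fishburn matrix: upper triangular (and supported on `[0,d) × [0,d)`),
with no zero row and no zero column. -/
def IsFishburn (M : FMat) : Prop :=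
  (∀ i j, (M.d ≤ i ∨ M.d ≤ j ∨ j < i) → M.entry i j = 0) ∧
  (∀ i, i < M.d → ∃ j, j < M.d ∧ M.entry i j ≠ 0) ∧
  (∀ j, j < M.d → ∃ i, i < M.d ∧ M.entry i j ≠ 0)

def entrySum (M : FMat) : ℕ :=
  ∑ i ∈ Finset.range M.d, ∑ j ∈ Finset.range M.d, M.entry i j

/-- Reflection of a matrix through its antidiagonal. -/
def reflect (M : FMat) : FMat :=
  ⟨M.d, fun i j => if i < M.d ∧ j < M.d then M.entry (M.d - 1 - j) (M.d - 1 - i) else 0⟩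

/-- The canonical sequence `(0^{m₀₀}, 1^{m₁₁}, 0^{m₀₁}, 2^{m₂₂}, 1^{m₁₂}, 0^{m₀₂}, …)`
(0-based indices) associated to a matrix; this is `f_MA(M)` for `M ∈ RMatrices`. -/
def canonSeq (M : FMat) : List ℕ :=
  (List.range M.d).flatMap (fun j =>
    (List.range (j + 1)).reverse.flatMap (fun i => List.replicate (M.entry i j) i))

/-- The dual canonical sequence
`(0^{m_{d-1,d-1}}, 1^{m_{d-2,d-2}}, 0^{m_{d-2,d-1}}, …, (d-1)^{m_{0,0}}, …, 0^{m_{0,d-1}})`,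
i.e. `f_MA` applied to the antidiagonal reflection of `M`. -/
def dualCanonSeq (M : FMat) : List ℕ :=
  (List.range M.d).flatMap (fun j =>
    (List.range (j + 1)).reverse.flatMap (fun i =>
      List.replicate (M.entry (M.d - 1 - j) (M.d - 1 - i)) i))

/-- A matrix is SE-free if it has no pair of nonzero entries `m i j`, `m i' j'`
with `i < i'`, `j < j'` and `i' ≤ j`. -/
def SEFree (M : FMat) : Prop :=
  ¬ ∃ i j i' j', i < i' ∧ j < j' ∧ i' ≤ j ∧ j' < M.d ∧
    M.entry i j ≠ 0 ∧ M.entry i' j' ≠ 0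

/-- Generalized ballot sequence (Yamanouchi word): in every prefix, each value `j+1`
occurs at most as often as `j`. -/
def IsBallot (l : List ℕ) : Prop :=
  ∀ k j, (l.take k).count (j + 1) ≤ (l.take k).count j

/-!
The positions `j > i` visible from `i` (those whose entry exceeds every entry in `[i, j)`) carry
increasing values, so the panorama lists them before `i`, in reverse order. Along that order their
views strictly increase: for `j < j'` both visible from `i`, the positions visible from `j'` are
those visible from `j` beyond `j'`, and `j'` is one of the latter. Hence the entry of `pan a` at `k`
is the length of a strictly increasing subsequence of the first `k` entries. Deleting entries never
creates ascents, so that length is at most the number of ascents of the first `k` entries plus one.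
-/

open scoped List

section Ascents

@[simp] lemma ascents_nil : ascents [] = 0 := rfl

@[simp] lemma ascents_singleton (x : ℕ) : ascents [x] = 0 := rfl

@[simp] lemma ascents_cons_cons (x y : ℕ) (l : List ℕ) :
    ascents (x :: y :: l) = ascents (y :: l) + if x < y then 1 else 0 := by
  unfold ascents
  split_ifs <;> simp [*]

lemma ascents_le_ascents_cons (x : ℕ) (l : List ℕ) : ascents l ≤ ascents (x :: l) := by
  cases l <;> simp

lemma ascents_append_le_ascents_append_cons (t l : List ℕ) (b : ℕ) :
    ascents (t ++ l) ≤ ascents (t ++ b :: l) := by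
  induction t with
  | nil => exact ascents_le_ascents_cons b l
  | cons x t ih =>
    rcases t with _ | ⟨y, t⟩
    · rcases l with _ | ⟨c, l⟩
      · exact Nat.zero_le _
      · -- `x < c` forces `x < b` or `b < c`
        simp only [List.cons_append, List.nil_append, ascents_cons_cons]
        split_ifs <;> omega
    · simpa using ih

lemma ascents_append_le_ascents_append_of_sublist {s l : List ℕ} (h : s <+ l) (t : List ℕ) :
    ascents (t ++ s) ≤ ascents (t ++ l) := by
  induction h generalizing t with
  | slnil => exact le_rfl
  | cons b _ ih => exact (ih t).trans (ascents_append_le_ascents_append_cons t _ b)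
  | cons_cons b _ ih => simpa using ih (t ++ [b])

lemma List.Sublist.ascents_le {s l : List ℕ} (h : s <+ l) : ascents s ≤ ascents l :=
  ascents_append_le_ascents_append_of_sublist h []

lemma length_le_ascents_add_one_of_pairwise_lt :
    ∀ {s : List ℕ}, s.Pairwise (· < ·) → s.length ≤ ascents s + 1
  | [], _ | [_], _ => by simp
  | x :: y :: l, h => by
    have hxy : x < y := List.rel_of_pairwise_cons h List.mem_cons_self
    have := length_le_ascents_add_one_of_pairwise_lt h.of_cons
    simp only [List.length_cons, ascents_cons_cons, if_pos hxy] at this ⊢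
    omega

lemma isAscSeq_of_exists_sublist_take {l : List ℕ}
    (h : ∀ k (hk : k < l.length), ∃ s, s <+ l.take k ∧ s.Pairwise (· < ·) ∧ s.length = l[k]) :
    IsAscSeq l := by
  refine ⟨?_, fun k hk _ => ?_⟩
  · rcases l with _ | ⟨x, l⟩
    · rfl
    · obtain ⟨s, hs, -, hlen⟩ := h 0 (by simp)
      simp only [List.take_zero, List.sublist_nil] at hs
      subst hs
      simpa using hlen.symm
  · obtain ⟨s, hs, hlt, hlen⟩ := h k hk
    rw [List.getD_eq_getElem _ _ hk, ← hlen]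
    exact (length_le_ascents_add_one_of_pairwise_lt hlt).trans (by simpa using hs.ascents_le)

end Ascents

section View

variable {α : Type*} [LinearOrder α] [Inhabited α] {a : List α} {i j j' : ℕ}

def visibleFrom (a : List α) (i : ℕ) : List ℕ :=
  (List.range a.length).filter (fun j =>
    decide (i < j ∧ ∀ k, k < j → i ≤ k → a.getD k default < a.getD j default))

lemma view_eq_length_visibleFrom (a : List α) (i : ℕ) : view a i = (visibleFrom a i).length :=
  rfl

lemma mem_visibleFrom : j ∈ visibleFrom a i ↔ j < a.length ∧ i < j ∧
    ∀ k, k < j → i ≤ k → a.getD k default < a.getD j default := by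
  simp [visibleFrom]

lemma getD_lt_of_mem_visibleFrom (hj : j ∈ visibleFrom a i) :
    a.getD i default < a.getD j default :=
  (mem_visibleFrom.1 hj).2.2 i (mem_visibleFrom.1 hj).2.1 le_rfl

lemma pairwise_lt_visibleFrom (a : List α) (i : ℕ) : (visibleFrom a i).Pairwise (· < ·) :=
  List.pairwise_lt_range.filter _

lemma visibleFrom_eq_filter (hj : j ∈ visibleFrom a i) :
    visibleFrom a j = (visibleFrom a i).filter (j < ·) := by
  obtain ⟨-, hij, hj⟩ := mem_visibleFrom.1 hj
  rw [visibleFrom, visibleFrom, List.filter_filter]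
  refine List.filter_congr fun y _ => ?_
  rw [Bool.eq_iff_iff]
  simp only [Bool.and_eq_true, decide_eq_true_eq]
  constructor
  · rintro ⟨hjy, hy⟩
    refine ⟨hjy, hij.trans hjy, fun k hky hik => ?_⟩
    rcases lt_or_ge k j with hkj | hjk
    · exact (hj k hkj hik).trans (hy j hjy le_rfl)
    · exact hy k hky hjk
  · rintro ⟨hjy, -, hy⟩
    exact ⟨hjy, fun k hky hjk => hy k hky (hij.le.trans hjk)⟩

lemma mem_visibleFrom_of_lt (hj : j ∈ visibleFrom a i) (hj' : j' ∈ visibleFrom a i)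
    (h : j < j') : j' ∈ visibleFrom a j := by
  simpa [visibleFrom_eq_filter hj] using ⟨hj', h⟩

lemma view_lt_view_of_mem_visibleFrom (hj : j ∈ visibleFrom a i) (hj' : j' ∈ visibleFrom a i)
    (h : j < j') : view a j' < view a j := by
  have hj'j := mem_visibleFrom_of_lt hj hj' h
  rw [view_eq_length_visibleFrom, view_eq_length_visibleFrom, visibleFrom_eq_filter hj'j]
  exact List.length_filter_lt_length_iff_exists.2 ⟨j', hj'j, by simp⟩

lemma pairwise_lt_map_view_reverse_visibleFrom (a : List α) (i : ℕ) :
    ((visibleFrom a i).reverse.map (view a)).Pairwise (· < ·) := by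
  rw [List.pairwise_map, List.pairwise_reverse]
  exact (pairwise_lt_visibleFrom a i).imp_of_mem view_lt_view_of_mem_visibleFrom

end View

section Panorama

variable {α : Type*} [LinearOrder α] [Inhabited α] {a : List α} {i j : ℕ}

def panLE (a : List α) (i j : ℕ) : Bool :=
  decide (a.getD j default < a.getD i default ∨ (a.getD i default = a.getD j default ∧ i ≤ j))

def panOrder (a : List α) : List ℕ :=
  (List.range a.length).mergeSort (panLE a)

lemma pan_eq_map_view_panOrder (a : List α) : pan a = (panOrder a).map (view a) :=
  rfl

lemma panLE_trans {k : ℕ} (hij : panLE a i j) (hjk : panLE a j k) : panLE a i k := by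
  simp only [panLE, decide_eq_true_eq] at *
  grind

lemma panLE_total (a : List α) (i j : ℕ) : (panLE a i j || panLE a j i) = true := by
  simp only [panLE, Bool.or_eq_true, decide_eq_true_eq]
  grind

lemma panLE_antisymm (hij : panLE a i j) (hji : panLE a j i) : i = j := by
  simp only [panLE, decide_eq_true_eq] at *
  grind

lemma getD_le_of_panLE (h : panLE a i j) : a.getD j default ≤ a.getD i default := by
  simp only [panLE, decide_eq_true_eq] at h
  grind

lemma panOrder_perm (a : List α) : (panOrder a).Perm (List.range a.length) :=
  List.mergeSort_perm _ _

lemma pairwise_panOrder (a : List α) : (panOrder a).Pairwise (fun i j => panLE a i j) :=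
  List.pairwise_mergeSort (le := panLE a) (fun _ _ _ => panLE_trans) (panLE_total a) _

lemma getD_panOrder_antitone {k k' : ℕ} (hk : k ≤ k') (hk' : k' < (panOrder a).length) :
    a.getD (panOrder a)[k'] default ≤ a.getD (panOrder a)[k] default := by
  rcases hk.eq_or_lt with rfl | hlt
  · exact le_rfl
  · exact getD_le_of_panLE (List.pairwise_iff_getElem.1 (pairwise_panOrder a) k k' _ hk' hlt)

lemma pairwise_panLE_reverse_visibleFrom (a : List α) (i : ℕ) :
    (visibleFrom a i).reverse.Pairwise (fun j j' => panLE a j j') := by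
  rw [List.pairwise_reverse]
  refine (pairwise_lt_visibleFrom a i).imp_of_mem fun hj hj' h => ?_
  simpa [panLE] using Or.inl (getD_lt_of_mem_visibleFrom (mem_visibleFrom_of_lt hj hj' h))

lemma reverse_visibleFrom_sublist_take {k : ℕ} (hk : k < (panOrder a).length) :
    (visibleFrom a (panOrder a)[k]).reverse <+ (panOrder a).take k := by
  set x := (panOrder a)[k]
  have hsub : (visibleFrom a x).reverse ⊆ (panOrder a).take k := by
    intro j hj
    rw [List.mem_reverse] at hj
    have hjL : j ∈ panOrder a :=
      (panOrder_perm a).mem_iff.2 (List.mem_range.2 (mem_visibleFrom.1 hj).1)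
    obtain ⟨m, hm, rfl⟩ := List.getElem_of_mem hjL
    have hmk : m < k := by
      by_contra! hkm
      exact (getD_lt_of_mem_visibleFrom hj).not_ge (getD_panOrder_antitone hkm hm)
    exact List.mem_take_iff_getElem.2 ⟨m, by omega, rfl⟩
  obtain ⟨s, hperm, hs⟩ :=
    (List.nodup_reverse.2 (pairwise_lt_visibleFrom a x).nodup).subperm hsub
  -- both lists are sorted by the antisymmetric `panLE`, so the permutation is the identity
  have hs_eq : s = (visibleFrom a x).reverse :=
    hperm.eq_of_pairwise (fun _ _ _ _ => panLE_antisymm)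
      ((pairwise_panOrder a).sublist (hs.trans (List.take_sublist _ _)))
      (pairwise_panLE_reverse_visibleFrom a x)
  exact hs_eq ▸ hs

lemma exists_sublist_take_pan (a : List α) (k : ℕ) (hk : k < (pan a).length) :
    ∃ s, s <+ (pan a).take k ∧ s.Pairwise (· < ·) ∧ s.length = (pan a)[k] := by
  have hk' : k < (panOrder a).length := by simpa [pan_eq_map_view_panOrder] using hk
  refine ⟨(visibleFrom a (panOrder a)[k]).reverse.map (view a), ?_,
    pairwise_lt_map_view_reverse_visibleFrom a _, ?_⟩
  · rw [pan_eq_map_view_panOrder, ← List.map_take]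
    exact (reverse_visibleFrom_sublist_take hk').map _
  · simp [pan_eq_map_view_panOrder, view_eq_length_visibleFrom]

end Panorama

theorem pan_isAscSeq_general (a : List ℝ) : IsAscSeq (pan a) :=
  isAscSeq_of_exists_sublist_take (exists_sublist_take_pan a)

theorem pan_isAscSeq (a : List ℝ) (h : a ≠ []) : IsAscSeq (pan a) :=
  pan_isAscSeq_general a
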